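/- Under the semi-discrete flow, the angle κ_n satisfies the semi-discrete mKdV equation dκ_n/dt = (1/a)·(tan(κ_{n+1}/2) − tan(κ_{n−1}/2)). -/

import Mathlib

open Matrix

noncomputable section

/-- Euclidean inner product on ℝ³ (written as `Fin 3 → ℝ`). -/
def dot3 (x y : Fin 3 → ℝ) : ℝ := x 0 * y 0 + x 1 * y 1 + x 2 * y 2

/-- Cross product on ℝ³. -/
def cross3 (x y : Fin 3 → ℝ) : Fin 3 → ℝ :=
  ![x 1 * y 2 - x 2 * y 1, x 2 * y 0 - x 0 * y 2, x 0 * y 1 - x 1 * y 0]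

/-- Euclidean norm on ℝ³. -/
def norm3 (x : Fin 3 → ℝ) : ℝ := Real.sqrt (dot3 x x)

/-- Tangent vector T_n = (γ_{n+1} − γ_n)/|γ_{n+1} − γ_n| of a discrete space curve. -/
def dT (γ : ℤ → Fin 3 → ℝ) (n : ℤ) : Fin 3 → ℝ :=
  (norm3 (γ (n + 1) - γ n))⁻¹ • (γ (n + 1) - γ n)

/-- Binormal vector B_n = (T_{n−1} × T_n)/|T_{n−1} × T_n|. -/
def dB (γ : ℤ → Fin 3 → ℝ) (n : ℤ) : Fin 3 → ℝ :=
  (norm3 (cross3 (dT γ (n - 1)) (dT γ n)))⁻¹ • cross3 (dT γ (n - 1)) (dT γ n)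

/-- Principal normal vector N_n = B_n × T_n. -/
def dN (γ : ℤ → Fin 3 → ℝ) (n : ℤ) : Fin 3 → ℝ := cross3 (dB γ n) (dT γ n)

/-!
Since ε and ν do not depend on n, the frame at n is expressed through T_{n-1} and T_n:
B_n = (T_{n-1} × T_n) / sin κ_n and N_n = (cos κ_n T_n - T_{n-1}) / sin κ_n, while the torsion
conditions give T_{n+1} · T_{n-1} and the triple product [T_{n-1}, T_n, T_{n+1}] in terms of
κ_n, κ_{n+1} and ν. So, writing dγ_m/dt = (ε/a) W_m, the inner products of W_m with nearby
tangents are explicit.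
In particular T_n · (W_{n+1} - W_n) = 0: the flow preserves segment lengths, hence
dT_n/dt = a⁻¹ (W_{n+1} - W_n). Differentiating cos κ_n = T_n · T_{n-1} and simplifying with the
half-angle identities gives -sin κ_n dκ_n/dt = -a⁻¹ sin κ_n (tan(κ_{n+1}/2) - tan(κ_{n-1}/2)).
-/

open Real Set

theorem dot3_eq_dotProduct (x y : Fin 3 → ℝ) : dot3 x y = x ⬝ᵥ y := (vec3_dotProduct x y).symm

theorem cross3_eq_crossProduct (x y : Fin 3 → ℝ) : cross3 x y = x ⨯₃ y := rfl

theorem norm3_eq_sqrt_dotProduct (x : Fin 3 → ℝ) : norm3 x = √(x ⬝ᵥ x) := by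
  rw [norm3, dot3_eq_dotProduct]

theorem tan_half_mul_one_add_cos (x : ℝ) : tan (x / 2) * (1 + cos x) = sin x := by
  obtain ⟨y, rfl⟩ : ∃ y, x = 2 * y := ⟨x / 2, by ring⟩
  rw [mul_div_cancel_left₀ _ two_ne_zero, cos_two_mul, sin_two_mul, tan_eq_sin_div_cos]
  rcases eq_or_ne (cos y) 0 with h | h
  · simp [h]
  · field_simp
    ring

theorem tan_half_mul_sin {x : ℝ} (hx : cos (x / 2) ≠ 0) : tan (x / 2) * sin x = 1 - cos x := by
  obtain ⟨y, rfl⟩ : ∃ y, x = 2 * y := ⟨x / 2, by ring⟩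
  rw [mul_div_cancel_left₀ _ two_ne_zero] at hx ⊢
  rw [cos_two_mul, sin_two_mul, tan_eq_sin_div_cos]
  field_simp
  linear_combination 2 * sin_sq_add_cos_sq y

theorem HasDerivAt.dotProduct {𝕜 ι : Type*} [NontriviallyNormedField 𝕜] [Fintype ι]
    {f g : 𝕜 → ι → 𝕜} {f' g' : ι → 𝕜} {t : 𝕜} (hf : HasDerivAt f f' t)
    (hg : HasDerivAt g g' t) :
    HasDerivAt (fun s => f s ⬝ᵥ g s) (f' ⬝ᵥ g t + f t ⬝ᵥ g') t := by
  have := HasDerivAt.fun_sum (u := Finset.univ) fun i _ =>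
    (hasDerivAt_pi.1 hf i).fun_mul (hasDerivAt_pi.1 hg i)
  simpa only [_root_.dotProduct, Finset.sum_add_distrib] using this

theorem hasDerivAt_inv_norm3_smul {f : ℝ → Fin 3 → ℝ} {f' : Fin 3 → ℝ} {t : ℝ}
    (hf : HasDerivAt f f' t) (h0 : norm3 (f t) ≠ 0) (horth : f t ⬝ᵥ f' = 0) :
    HasDerivAt (fun s => (norm3 (f s))⁻¹ • f s) ((norm3 (f t))⁻¹ • f') t := by
  have hsq : HasDerivAt (fun s => f s ⬝ᵥ f s) 0 t := by
    simpa only [dotProduct_comm f', horth, add_zero] using hf.dotProduct hf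
  have hsq0 : f t ⬝ᵥ f t ≠ 0 := fun h => h0 (by rw [norm3_eq_sqrt_dotProduct, h, sqrt_zero])
  have hnorm : HasDerivAt (fun s => norm3 (f s)) 0 t := by
    simpa only [norm3_eq_sqrt_dotProduct, zero_div] using hsq.sqrt hsq0
  simpa only [neg_zero, zero_div, zero_smul, add_zero] using (hnorm.fun_inv h0).fun_smul hf

theorem hasDerivAt_of_hasDerivAt_cos {κ : ℝ → ℝ} {c t : ℝ} (hκ : ∀ s, κ s ∈ Icc 0 π)
    (ht : κ t ∈ Ioo 0 π) (h : HasDerivAt (fun s => cos (κ s)) c t) :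
    HasDerivAt κ (-c / sin (κ t)) t := by
  have hsin : 0 < sin (κ t) := sin_pos_of_pos_of_lt_pi ht.1 ht.2
  have harccos : κ = arccos ∘ fun s => cos (κ s) :=
    funext fun s => (arccos_cos (hκ s).1 (hκ s).2).symm
  have hne : cos (κ t) ≠ -1 ∧ cos (κ t) ≠ 1 := by
    constructor <;> intro h1 <;> nlinarith [sin_sq_add_cos_sq (κ t)]
  have := (hasDerivAt_arccos hne.1 hne.2).comp t h
  rw [← harccos] at this
  refine this.congr_deriv ?_
  rw [← sin_eq_sqrt_one_sub_cos_sq (hκ t).1 (hκ t).2]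
  ring

structure HasFrenetAngles (γ : ℤ → Fin 3 → ℝ) (ε ν : ℝ) (κ : ℤ → ℝ) : Prop where
  norm_sub : ∀ n, norm3 (γ (n + 1) - γ n) = ε
  mem_Ioo : ∀ n, κ n ∈ Ioo 0 π
  cos_curvature : ∀ n, dot3 (dT γ n) (dT γ (n - 1)) = cos (κ n)
  cos_torsion : ∀ n, dot3 (dB γ n) (dB γ (n - 1)) = cos ν
  sin_torsion : ∀ n, dot3 (dB γ n) (dN γ (n - 1)) = sin ν

/-- The flow of the theorem reads `dγ_n/dt = (ε / a) • mkdvVelocity γ ν κ n`. -/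
def mkdvVelocity (γ : ℤ → Fin 3 → ℝ) (ν : ℝ) (κ : ℤ → ℝ) (n : ℤ) : Fin 3 → ℝ :=
  cos ν • dT γ n - (cos ν * tan (κ n / 2)) • dN γ n + (sin ν * tan (κ n / 2)) • dB γ n

namespace HasFrenetAngles

variable {γ : ℤ → Fin 3 → ℝ} {ε ν : ℝ} {κ : ℤ → ℝ}

/-- If `ε = 0` every tangent, hence every binormal, vanishes, against `cos² ν + sin² ν = 1`. -/
theorem eps_pos (h : HasFrenetAngles γ ε ν κ) : 0 < ε := by
  have hε0 : 0 ≤ ε := by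
    rw [← h.norm_sub 0]
    exact sqrt_nonneg _
  refine hε0.lt_of_ne fun hε => ?_
  have hT (n : ℤ) : dT γ n = 0 := by simp [dT, h.norm_sub n, ← hε]
  have hB (n : ℤ) : dB γ n = 0 := by simp [dB, hT, cross3_eq_crossProduct]
  have := cos_sq_add_sin_sq ν
  rw [← h.cos_torsion 0, ← h.sin_torsion 0, hB] at this
  simp [dot3] at this

theorem sub_eq_smul_tangent (h : HasFrenetAngles γ ε ν κ) (n : ℤ) :
    γ (n + 1) - γ n = ε • dT γ n := by
  rw [dT, h.norm_sub, smul_inv_smul₀ h.eps_pos.ne']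

theorem tangent_dot_self (h : HasFrenetAngles γ ε ν κ) (n : ℤ) : dT γ n ⬝ᵥ dT γ n = 1 := by
  have hsq : (γ (n + 1) - γ n) ⬝ᵥ (γ (n + 1) - γ n) = ε ^ 2 := by
    rw [← h.norm_sub n, norm3_eq_sqrt_dotProduct, sq_sqrt]
    exact Finset.sum_nonneg fun i _ => mul_self_nonneg _
  rw [h.sub_eq_smul_tangent, smul_dotProduct, dotProduct_smul, smul_eq_mul, smul_eq_mul,
    ← mul_assoc, ← sq] at hsq
  exact (mul_eq_left₀ (pow_ne_zero 2 h.eps_pos.ne')).1 hsq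

theorem tangent_dot_pred (h : HasFrenetAngles γ ε ν κ) (n : ℤ) :
    dT γ n ⬝ᵥ dT γ (n - 1) = cos (κ n) := by
  rw [← dot3_eq_dotProduct, h.cos_curvature]

theorem pred_dot_tangent (h : HasFrenetAngles γ ε ν κ) (n : ℤ) :
    dT γ (n - 1) ⬝ᵥ dT γ n = cos (κ n) := by
  rw [dotProduct_comm, h.tangent_dot_pred]

theorem succ_dot_tangent (h : HasFrenetAngles γ ε ν κ) (n : ℤ) :
    dT γ (n + 1) ⬝ᵥ dT γ n = cos (κ (n + 1)) := by
  simpa only [add_sub_cancel_right] using h.tangent_dot_pred (n + 1)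

theorem sin_pos (h : HasFrenetAngles γ ε ν κ) (n : ℤ) : 0 < sin (κ n) :=
  sin_pos_of_pos_of_lt_pi (h.mem_Ioo n).1 (h.mem_Ioo n).2

theorem binormal_eq (h : HasFrenetAngles γ ε ν κ) (n : ℤ) :
    dB γ n = (sin (κ n))⁻¹ • (dT γ (n - 1) ⨯₃ dT γ n) := by
  have hcross : (dT γ (n - 1) ⨯₃ dT γ n) ⬝ᵥ (dT γ (n - 1) ⨯₃ dT γ n) = sin (κ n) ^ 2 := by
    rw [cross_dot_cross, h.tangent_dot_self, h.tangent_dot_self, h.pred_dot_tangent,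
      h.tangent_dot_pred, sin_sq]
    ring
  rw [dB, cross3_eq_crossProduct, norm3_eq_sqrt_dotProduct, hcross, sqrt_sq (h.sin_pos n).le]

theorem normal_eq (h : HasFrenetAngles γ ε ν κ) (n : ℤ) :
    dN γ n = (sin (κ n))⁻¹ • (cos (κ n) • dT γ n - dT γ (n - 1)) := by
  rw [dN, cross3_eq_crossProduct, h.binormal_eq, LinearMap.map_smul₂,
    cross_cross_eq_smul_sub_smul, h.pred_dot_tangent, h.tangent_dot_self, one_smul]

theorem succ_dot_pred (h : HasFrenetAngles γ ε ν κ) (n : ℤ) :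
    dT γ (n + 1) ⬝ᵥ dT γ (n - 1) =
      cos (κ n) * cos (κ (n + 1)) - cos ν * sin (κ n) * sin (κ (n + 1)) := by
  have := h.cos_torsion (n + 1)
  rw [dot3_eq_dotProduct, h.binormal_eq, h.binormal_eq, add_sub_cancel_right, smul_dotProduct,
    dotProduct_smul, cross_dot_cross, h.tangent_dot_pred, h.tangent_dot_self,
    h.succ_dot_tangent, smul_eq_mul, smul_eq_mul] at this
  field_simp [(h.sin_pos n).ne', (h.sin_pos (n + 1)).ne'] at this
  linear_combination -this

theorem pred_dot_cross_succ (h : HasFrenetAngles γ ε ν κ) (n : ℤ) :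
    dT γ (n - 1) ⬝ᵥ dT γ n ⨯₃ dT γ (n + 1) = -(sin ν * sin (κ n) * sin (κ (n + 1))) := by
  have := h.sin_torsion (n + 1)
  have hn : (dT γ n ⨯₃ dT γ (n + 1)) ⬝ᵥ dT γ n = 0 := by rw [dotProduct_comm, dot_self_cross]
  rw [dot3_eq_dotProduct, h.binormal_eq, h.normal_eq, add_sub_cancel_right, smul_dotProduct,
    dotProduct_smul, dotProduct_sub, dotProduct_smul, hn, dotProduct_comm _ (dT γ (n - 1)),
    smul_eq_mul, smul_eq_mul, smul_eq_mul] at this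
  field_simp [(h.sin_pos n).ne', (h.sin_pos (n + 1)).ne'] at this
  linear_combination -this

theorem tan_half_mul_sin (h : HasFrenetAngles γ ε ν κ) (n : ℤ) :
    tan (κ n / 2) * sin (κ n) = 1 - cos (κ n) :=
  _root_.tan_half_mul_sin (cos_pos_of_mem_Ioo
    ⟨by linarith [(h.mem_Ioo n).1, pi_pos], by linarith [(h.mem_Ioo n).2]⟩).ne'

theorem mkdvVelocity_dotProduct (h : HasFrenetAngles γ ε ν κ) (n : ℤ) (v : Fin 3 → ℝ) :
    mkdvVelocity γ ν κ n ⬝ᵥ v = cos ν * (dT γ n ⬝ᵥ v)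
      - cos ν * tan (κ n / 2) / sin (κ n) * (cos (κ n) * (dT γ n ⬝ᵥ v) - dT γ (n - 1) ⬝ᵥ v)
      + sin ν * tan (κ n / 2) / sin (κ n) * ((dT γ (n - 1) ⨯₃ dT γ n) ⬝ᵥ v) := by
  simp only [mkdvVelocity, h.normal_eq, h.binormal_eq, add_dotProduct, sub_dotProduct,
    smul_dotProduct, smul_eq_mul]
  ring

theorem mkdvVelocity_dot_tangent (h : HasFrenetAngles γ ε ν κ) (n : ℤ) :
    mkdvVelocity γ ν κ n ⬝ᵥ dT γ n = cos ν := by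
  rw [h.mkdvVelocity_dotProduct, h.tangent_dot_self, h.pred_dot_tangent, dotProduct_comm,
    dot_cross_self]
  ring

theorem mkdvVelocity_succ_dot_tangent (h : HasFrenetAngles γ ε ν κ) (n : ℤ) :
    mkdvVelocity γ ν κ (n + 1) ⬝ᵥ dT γ n = cos ν := by
  rw [h.mkdvVelocity_dotProduct, add_sub_cancel_right, h.succ_dot_tangent, h.tangent_dot_self,
    dotProduct_comm, dot_self_cross]
  field_simp [(h.sin_pos (n + 1)).ne']
  linear_combination cos ν * sin (κ (n + 1)) * h.tan_half_mul_sin (n + 1)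
    - cos ν * tan (κ (n + 1) / 2) * sin_sq_add_cos_sq (κ (n + 1))

theorem mkdvVelocity_succ_dot_pred (h : HasFrenetAngles γ ε ν κ) (n : ℤ) :
    mkdvVelocity γ ν κ (n + 1) ⬝ᵥ dT γ (n - 1) =
      cos ν * cos (κ n) - tan (κ (n + 1) / 2) * sin (κ n) := by
  rw [h.mkdvVelocity_dotProduct, add_sub_cancel_right, h.succ_dot_pred, h.tangent_dot_pred,
    dotProduct_comm, h.pred_dot_cross_succ]
  field_simp [(h.sin_pos (n + 1)).ne']
  linear_combination cos ν * cos (κ n) * sin (κ (n + 1)) * h.tan_half_mul_sin (n + 1)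
    - cos ν * cos (κ n) * tan (κ (n + 1) / 2) * sin_sq_add_cos_sq (κ (n + 1))
    + cos ν ^ 2 * sin (κ n) * sin (κ (n + 1)) * tan_half_mul_one_add_cos (κ (n + 1))
    - tan (κ (n + 1) / 2) * sin (κ n) * sin (κ (n + 1)) * sin_sq_add_cos_sq ν

theorem mkdvVelocity_pred_dot_tangent (h : HasFrenetAngles γ ε ν κ) (n : ℤ) :
    mkdvVelocity γ ν κ (n - 1) ⬝ᵥ dT γ n =
      cos ν * cos (κ n) - tan (κ (n - 1) / 2) * sin (κ n) := by
  have hsucc := h.succ_dot_pred (n - 1)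
  have hcross := h.pred_dot_cross_succ (n - 1)
  rw [sub_add_cancel] at hsucc hcross
  rw [h.mkdvVelocity_dotProduct, h.pred_dot_tangent, dotProduct_comm, hsucc,
    dotProduct_comm, triple_product_permutation, hcross]
  field_simp [(h.sin_pos (n - 1)).ne']
  linear_combination -tan (κ (n - 1) / 2) * sin (κ (n - 1)) * sin (κ n) * sin_sq_add_cos_sq ν

theorem tangent_dot_mkdvVelocity_sub (h : HasFrenetAngles γ ε ν κ) (n : ℤ) :
    dT γ n ⬝ᵥ (mkdvVelocity γ ν κ (n + 1) - mkdvVelocity γ ν κ n) = 0 := by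
  rw [dotProduct_sub, dotProduct_comm, h.mkdvVelocity_succ_dot_tangent, dotProduct_comm,
    h.mkdvVelocity_dot_tangent, sub_self]

theorem mkdvVelocity_sub_dot_tangent_add (h : HasFrenetAngles γ ε ν κ) (n : ℤ) :
    (mkdvVelocity γ ν κ (n + 1) - mkdvVelocity γ ν κ n) ⬝ᵥ dT γ (n - 1)
      + dT γ n ⬝ᵥ (mkdvVelocity γ ν κ n - mkdvVelocity γ ν κ (n - 1)) =
      -(sin (κ n) * (tan (κ (n + 1) / 2) - tan (κ (n - 1) / 2))) := by
  have hprev := h.mkdvVelocity_succ_dot_tangent (n - 1)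
  rw [sub_add_cancel] at hprev
  rw [sub_dotProduct, dotProduct_sub, dotProduct_comm (dT γ n), dotProduct_comm (dT γ n),
    h.mkdvVelocity_succ_dot_pred, hprev, h.mkdvVelocity_dot_tangent,
    h.mkdvVelocity_pred_dot_tangent]
  ring

theorem hasDerivAt_tangent {γ : ℝ → ℤ → Fin 3 → ℝ} {t a : ℝ}
    (h : HasFrenetAngles (γ t) ε ν κ)
    (hflow : ∀ m, HasDerivAt (fun s => γ s m) ((ε / a) • mkdvVelocity (γ t) ν κ m) t) (n : ℤ) :
    HasDerivAt (fun s => dT (γ s) n)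
      (a⁻¹ • (mkdvVelocity (γ t) ν κ (n + 1) - mkdvVelocity (γ t) ν κ n)) t := by
  have hε0 := h.eps_pos.ne'
  have horth : (γ t (n + 1) - γ t n) ⬝ᵥ
      ((ε / a) • mkdvVelocity (γ t) ν κ (n + 1) - (ε / a) • mkdvVelocity (γ t) ν κ n) = 0 := by
    rw [h.sub_eq_smul_tangent, ← smul_sub, smul_dotProduct, dotProduct_smul,
      h.tangent_dot_mkdvVelocity_sub, smul_zero, smul_zero]
  have := hasDerivAt_inv_norm3_smul ((hflow (n + 1)).fun_sub (hflow n)) (h.norm_sub n ▸ hε0) horth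
  rwa [h.norm_sub n, ← smul_sub, smul_smul, div_eq_mul_inv, inv_mul_cancel_left₀ hε0] at this

end HasFrenetAngles

theorem statement10_general
    (γ : ℝ → ℤ → Fin 3 → ℝ) (ε ν : ℝ → ℝ) (κ : ℝ → ℤ → ℝ) (a : ℝ → ℝ)
    (hε : ∀ t n, norm3 (γ t (n + 1) - γ t n) = ε t)
    (hνcos : ∀ t n, dot3 (dB (γ t) n) (dB (γ t) (n - 1)) = Real.cos (ν t))
    (hνsin : ∀ t n, dot3 (dB (γ t) n) (dN (γ t) (n - 1)) = Real.sin (ν t))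
    (hκ : ∀ t n, κ t n ∈ Set.Ioo 0 Real.pi)
    (hκcos : ∀ t n, dot3 (dT (γ t) n) (dT (γ t) (n - 1)) = Real.cos (κ t n))
    (hflow : ∀ t n, HasDerivAt (fun s => γ s n)
      ((ε t / a t) • (Real.cos (ν t) • dT (γ t) n
        - (Real.cos (ν t) * Real.tan (κ t n / 2)) • dN (γ t) n
        + (Real.sin (ν t) * Real.tan (κ t n / 2)) • dB (γ t) n)) t) :
    ∀ t n, HasDerivAt (fun s => κ s n)
      ((1 / a t) * (Real.tan (κ t (n + 1) / 2) - Real.tan (κ t (n - 1) / 2))) t := by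
  intro t n
  have hγ (s : ℝ) : HasFrenetAngles (γ s) (ε s) (ν s) (κ s) :=
    ⟨hε s, hκ s, hκcos s, hνcos s, hνsin s⟩
  have hT := (hγ t).hasDerivAt_tangent (a := a t) (hflow t)
  have hcos : HasDerivAt (fun s => cos (κ s n))
      ((a t)⁻¹ * -(sin (κ t n) * (tan (κ t (n + 1) / 2) - tan (κ t (n - 1) / 2)))) t := by
    have hcos_eq : (fun s => cos (κ s n)) = fun s => dT (γ s) n ⬝ᵥ dT (γ s) (n - 1) :=
      funext fun s => by rw [← hκcos, dot3_eq_dotProduct]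
    have := (hT n).dotProduct (hT (n - 1))
    rw [hcos_eq]
    rwa [sub_add_cancel, smul_dotProduct, dotProduct_smul, smul_eq_mul, smul_eq_mul, ← mul_add,
      (hγ t).mkdvVelocity_sub_dot_tangent_add] at this
  refine (hasDerivAt_of_hasDerivAt_cos (fun s => Ioo_subset_Icc_self (hκ s n)) (hκ t n)
    hcos).congr_deriv ?_
  field_simp [((hγ t).sin_pos n).ne']

/-- Under the semi-discrete flow, the angle κ_n satisfies the semi-discrete mKdV
equation dκ_n/dt = (1/a)(tan(κ_{n+1}/2) − tan(κ_{n−1}/2)). -/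
theorem statement10
    (γ : ℝ → ℤ → Fin 3 → ℝ) (ε ν : ℝ → ℝ) (κ : ℝ → ℤ → ℝ) (a : ℝ → ℝ)
    (hcurve : ∀ t n, ¬ Collinear ℝ ({γ t (n - 1), γ t n, γ t (n + 1)} : Set (Fin 3 → ℝ)))
    (hε : ∀ t n, norm3 (γ t (n + 1) - γ t n) = ε t)
    (hν : ∀ t, ν t ∈ Set.Ico (-Real.pi) Real.pi)
    (hνcos : ∀ t n, dot3 (dB (γ t) n) (dB (γ t) (n - 1)) = Real.cos (ν t))
    (hνsin : ∀ t n, dot3 (dB (γ t) n) (dN (γ t) (n - 1)) = Real.sin (ν t))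
    (hκ : ∀ t n, κ t n ∈ Set.Ioo 0 Real.pi)
    (hκcos : ∀ t n, dot3 (dT (γ t) n) (dT (γ t) (n - 1)) = Real.cos (κ t n))
    (ha : ∀ t, a t = (1 + Real.tan (ν t / 2) ^ 2) * ε t)
    (hflow : ∀ t n, HasDerivAt (fun s => γ s n)
      ((ε t / a t) • (Real.cos (ν t) • dT (γ t) n
        - (Real.cos (ν t) * Real.tan (κ t n / 2)) • dN (γ t) n
        + (Real.sin (ν t) * Real.tan (κ t n / 2)) • dB (γ t) n)) t) :
    ∀ t n, HasDerivAt (fun s => κ s n)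
      ((1 / a t) * (Real.tan (κ t (n + 1) / 2) - Real.tan (κ t (n - 1) / 2))) t :=
  statement10_general γ ε ν κ a hε hνcos hνsin hκ hκcos hflow
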